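/- Let n ≥ 1 and let C be an n×n real matrix with nonnegative entries, and let P = diag(Ĉe)^{-1} Ĉ be the row-normalization of the augmented citation matrix Ĉ. Then there exists a unique vector x ∈ ℝ^{n+1} such that x_i > 0 for every i, ∑_i x_i = 1, and xᵀ P = xᵀ (the Perron vector of P). -/

import Mathlib

/-- The augmented citation matrix `Ĉ`: a dummy node `n+1` is added which cites
and is cited by all existing nodes, but not itself. -/
def hatC {n : ℕ} (C : Matrix (Fin n) (Fin n) ℝ) :
    Matrix (Fin (n + 1)) (Fin (n + 1)) ℝ := fun i j =>
  if hi : (i : ℕ) < n then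
    if hj : (j : ℕ) < n then C ⟨i, hi⟩ ⟨j, hj⟩ else 1
  else if (j : ℕ) < n then 1 else 0

/-- Row-normalization `P = diag(Ĉe)⁻¹ Ĉ` of a matrix. -/
noncomputable def rowNorm {ι : Type*} [Fintype ι] [DecidableEq ι] (A : Matrix ι ι ℝ) :
    Matrix ι ι ℝ :=
  Matrix.diagonal (fun i => (∑ j, A i j)⁻¹) * A

/-!
Row-normalising `Ĉ` gives a row-stochastic matrix `P` whose positive entries contain the star
through the dummy node, so `P` is irreducible. Since `P e = e`, `det (P - 1) = 0` and `P` has a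
nonzero left fixed vector `v`. Because `P` preserves coordinate sums, any `w ≤ w P` is fixed;
this applies to `v⁺` (or `(-v)⁺`), a nonnegative nonzero fixed vector. Positivity of a fixed
nonnegative vector propagates along the edges of `P`, so by irreducibility it is strictly
positive; normalising gives existence. If `z` is the difference of two normalised fixed vectors,
then `∑ z = 0`, and `z⁺` would be strictly positive unless it vanishes, so `z ≤ 0` and `z = 0`.
-/

namespace Matrix

variable {ι : Type*} [Fintype ι] {P : Matrix ι ι ℝ}

lemma pos_of_path_of_vecMul_le (hP : ∀ i j, 0 ≤ P i j) {v : ι → ℝ} (hv : 0 ≤ v)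
    (hsub : v ᵥ* P ≤ v) {i j : ι} (p : @Quiver.Path ι P.toQuiver i j) (hi : 0 < v i) :
    0 < v j := by
  induction p with
  | nil => exact hi
  | @cons b c _ e ih =>
    calc 0 < v b * P b c := mul_pos ih e.down
      _ ≤ (v ᵥ* P) c := Finset.single_le_sum (f := fun k => v k * P k c)
          (fun k _ => mul_nonneg (hv k) (hP k c)) (Finset.mem_univ b)
      _ ≤ v c := hsub c

lemma IsIrreducible.pos_of_vecMul_le (hP : P.IsIrreducible) {v : ι → ℝ} (hv : 0 ≤ v)
    (hsub : v ᵥ* P ≤ v) (hne : v ≠ 0) (j : ι) : 0 < v j := by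
  obtain ⟨i, hi⟩ : ∃ i, 0 < v i := by
    by_contra! h
    exact hne (le_antisymm h hv)
  obtain ⟨p, -⟩ := hP.connected i j
  exact pos_of_path_of_vecMul_le hP.nonneg hv hsub p hi

variable [DecidableEq ι]

lemma vecMul_eq_self_of_le_vecMul (hP : P ∈ rowStochastic ℝ ι) {w : ι → ℝ}
    (hw : w ≤ w ᵥ* P) : w ᵥ* P = w := by
  have hsum : ∑ i, w i = ∑ i, (w ᵥ* P) i := by
    simpa [dotProduct_one, one_vecMul_of_mem_rowStochastic hP] using
      dotProduct_mulVec w P (1 : ι → ℝ)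
  funext i
  exact ((Finset.sum_eq_sum_iff_of_le fun i _ => hw i).1 hsum i (Finset.mem_univ i)).symm

lemma posPart_vecMul_eq_self (hP : P ∈ rowStochastic ℝ ι) {v : ι → ℝ}
    (hv : v ᵥ* P = v) : v⁺ ᵥ* P = v⁺ := by
  refine vecMul_eq_self_of_le_vecMul hP fun j => ?_
  rw [Pi.posPart_apply, posPart_def]
  refine max_le ?_ (nonneg_vecMul_of_mem_rowStochastic hP (posPart_nonneg v) j)
  calc v j = (v ᵥ* P) j := by rw [hv]
    _ ≤ (v⁺ ᵥ* P) j := Finset.sum_le_sum fun i _ =>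
        mul_le_mul_of_nonneg_right (le_posPart (v i)) (nonneg_of_mem_rowStochastic hP)

lemma exists_vecMul_eq_self [Nonempty ι] (hP : P *ᵥ 1 = 1) :
    ∃ v : ι → ℝ, v ≠ 0 ∧ v ᵥ* P = v := by
  have hdet : (P - 1).det = 0 := by
    refine exists_mulVec_eq_zero_iff.1 ⟨1, one_ne_zero, ?_⟩
    rw [sub_mulVec, one_mulVec, hP, sub_self]
  obtain ⟨v, hv0, hv⟩ := exists_vecMul_eq_zero_iff.2 hdet
  exact ⟨v, hv0, by rwa [vecMul_sub, vecMul_one, sub_eq_zero] at hv⟩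

lemma exists_nonneg_vecMul_eq_self [Nonempty ι] (hP : P ∈ rowStochastic ℝ ι) :
    ∃ w : ι → ℝ, 0 ≤ w ∧ w ≠ 0 ∧ w ᵥ* P = w := by
  obtain ⟨v, hv0, hv⟩ := exists_vecMul_eq_self (one_vecMul_of_mem_rowStochastic hP)
  by_cases hpos : v⁺ = 0
  · refine ⟨(-v)⁺, posPart_nonneg _, fun h => hv0 ?_,
      posPart_vecMul_eq_self hP (by rw [neg_vecMul, hv])⟩
    exact le_antisymm (posPart_eq_zero.1 hpos) (neg_nonpos.1 (posPart_eq_zero.1 h))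
  · exact ⟨v⁺, posPart_nonneg v, hpos, posPart_vecMul_eq_self hP hv⟩

lemma IsIrreducible.eq_zero_of_vecMul_eq_self (hP : P.IsIrreducible)
    (hst : P ∈ rowStochastic ℝ ι) {z : ι → ℝ} (hz : z ᵥ* P = z) (hsum : ∑ i, z i = 0) :
    z = 0 := by
  have hpos : z⁺ = 0 := by
    by_contra hne
    have hz_pos : ∀ i, 0 < z i := fun i => by
      simpa [Pi.posPart_apply] using
        hP.pos_of_vecMul_le (posPart_nonneg z) (posPart_vecMul_eq_self hst hz).le hne i
    obtain ⟨i, -⟩ := Function.ne_iff.1 hne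
    exact (Finset.sum_pos (fun i _ => hz_pos i) ⟨i, Finset.mem_univ i⟩).ne' hsum
  have hnonpos : z ≤ 0 := posPart_eq_zero.1 hpos
  funext i
  exact (Finset.sum_eq_zero_iff_of_nonpos fun i _ => hnonpos i).1 hsum i (Finset.mem_univ i)

theorem IsIrreducible.existsUnique_stationary [Nonempty ι] (hP : P.IsIrreducible)
    (hst : P ∈ rowStochastic ℝ ι) :
    ∃! x : ι → ℝ, (∀ i, 0 < x i) ∧ ∑ i, x i = 1 ∧ x ᵥ* P = x := by
  obtain ⟨w, hw0, hne, hw⟩ := exists_nonneg_vecMul_eq_self hst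
  have hwpos := hP.pos_of_vecMul_le hw0 hw.le hne
  have hS : 0 < ∑ i, w i := Finset.sum_pos (fun i _ => hwpos i) Finset.univ_nonempty
  refine ⟨(∑ i, w i)⁻¹ • w, ⟨fun i => ?_, ?_, by rw [smul_vecMul, hw]⟩, ?_⟩
  · simpa using mul_pos (inv_pos.2 hS) (hwpos i)
  · simp [← Finset.mul_sum, hS.ne']
  · rintro y ⟨-, hy1, hy⟩
    refine sub_eq_zero.1 (hP.eq_zero_of_vecMul_eq_self hst ?_ ?_)
    · rw [sub_vecMul, hy, smul_vecMul, hw]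
    · simp [Finset.sum_sub_distrib, hy1, ← Finset.mul_sum, hS.ne']

lemma isIrreducible_of_pos_last {n : ℕ} (hn : 0 < n)
    {A : Matrix (Fin (n + 1)) (Fin (n + 1)) ℝ} (hA : ∀ i j, 0 ≤ A i j)
    (hto : ∀ i : Fin n, 0 < A i.castSucc (Fin.last n))
    (hfrom : ∀ j : Fin n, 0 < A (Fin.last n) j.castSucc) : A.IsIrreducible := by
  refine ⟨hA, ?_⟩
  let := A.toQuiver
  let edgeTo (i : Fin n) : i.castSucc ⟶ Fin.last n := PLift.up (hto i)
  let edgeFrom (j : Fin n) : Fin.last n ⟶ j.castSucc := PLift.up (hfrom j)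
  have toLast : ∀ i, ∃ p : Quiver.Path i (Fin.last n), 0 < p.length := by
    refine Fin.lastCases ?_ fun i => ⟨(edgeTo i).toPath, Nat.succ_pos _⟩
    exact ⟨(edgeFrom ⟨0, hn⟩).toPath.cons (edgeTo ⟨0, hn⟩), Nat.succ_pos _⟩
  intro i j
  obtain ⟨p, hp⟩ := toLast i
  induction j using Fin.lastCases with
  | last => exact ⟨p, hp⟩
  | cast j => exact ⟨p.cons (edgeFrom j), Nat.succ_pos _⟩

end Matrix

section rowNorm

variable {ι : Type*} [Fintype ι] [DecidableEq ι] {A : Matrix ι ι ℝ}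

lemma rowNorm_apply (i j : ι) : rowNorm A i j = (∑ k, A i k)⁻¹ * A i j := by
  rw [rowNorm, Matrix.diagonal_mul]

lemma rowNorm_apply_pos (hA : ∀ i j, 0 ≤ A i j) {i j : ι} (hij : 0 < A i j) :
    0 < rowNorm A i j := by
  rw [rowNorm_apply]
  exact mul_pos (inv_pos.2 (Finset.sum_pos' (fun k _ => hA i k) ⟨j, Finset.mem_univ j, hij⟩)) hij

lemma rowNorm_mem_rowStochastic (hA : ∀ i j, 0 ≤ A i j) (hrow : ∀ i, ∃ j, 0 < A i j) :
    rowNorm A ∈ Matrix.rowStochastic ℝ ι := by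
  refine Matrix.mem_rowStochastic_iff_sum.2 ⟨fun i j => ?_, fun i => ?_⟩
  · rw [rowNorm_apply]
    exact mul_nonneg (inv_nonneg.2 (Finset.sum_nonneg fun k _ => hA i k)) (hA i j)
  · obtain ⟨j, hj⟩ := hrow i
    simp_rw [rowNorm_apply, ← Finset.mul_sum]
    exact inv_mul_cancel₀ (Finset.sum_pos' (fun k _ => hA i k) ⟨j, Finset.mem_univ j, hj⟩).ne'

end rowNorm

section hatC

variable {n : ℕ} (C : Matrix (Fin n) (Fin n) ℝ)

lemma hatC_nonneg (hC : ∀ i j, 0 ≤ C i j) (i j : Fin (n + 1)) : 0 ≤ hatC C i j := by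
  unfold hatC
  split_ifs <;> first | exact hC _ _ | norm_num

lemma hatC_castSucc_last (i : Fin n) : hatC C i.castSucc (Fin.last n) = 1 := by
  simp [hatC]

lemma hatC_last_castSucc (j : Fin n) : hatC C (Fin.last n) j.castSucc = 1 := by
  simp [hatC]

lemma exists_hatC_pos (hn : 0 < n) (i : Fin (n + 1)) : ∃ j, 0 < hatC C i j := by
  induction i using Fin.lastCases with
  | last => exact ⟨Fin.castSucc ⟨0, hn⟩, by rw [hatC_last_castSucc]; exact one_pos⟩
  | cast i => exact ⟨Fin.last n, by rw [hatC_castSucc_last]; exact one_pos⟩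

end hatC

theorem stmt_12 {n : ℕ} (hn : 1 ≤ n) (C : Matrix (Fin n) (Fin n) ℝ)
    (hC : ∀ i j, 0 ≤ C i j) :
    ∃! x : Fin (n + 1) → ℝ,
      (∀ i, 0 < x i) ∧ (∑ i, x i = 1) ∧
        Matrix.vecMul x (rowNorm (hatC C)) = x := by
  have hA := hatC_nonneg C hC
  have hstoch := rowNorm_mem_rowStochastic hA (exists_hatC_pos C hn)
  have hpos {i j} (h : hatC C i j = 1) : 0 < rowNorm (hatC C) i j :=
    rowNorm_apply_pos hA (h ▸ one_pos)
  refine Matrix.IsIrreducible.existsUnique_stationary ?_ hstoch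
  exact Matrix.isIrreducible_of_pos_last hn hstoch.1
    (fun i => hpos (hatC_castSucc_last C i)) (fun j => hpos (hatC_last_castSucc C j))
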